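/- arXiv:1908.09256 — 7 statements merged into one kernel-verified Lean document; each statement's English description precedes it below -/
import Mathlib

section
/- If Q > 0 satisfies the fixed point equation Q = (1/N) ∫₀^A p(x) w(x;Q) dx, then Q < 1. -/
open MeasureTheory Real Set Filter

/-- `Λ(x,s) = ∫_s^x θ(t) dt`. -/
noncomputable def Lam (θ : ℝ → ℝ) (x s : ℝ) : ℝ := ∫ t in s..x, θ t

/-- `w(x;Q) = Q e^{-γx} ∫₀^x e^{γs} θ(s) e^{-Q Λ(x,s)} ds`. -/
noncomputable def w (γ : ℝ) (θ : ℝ → ℝ) (Q x : ℝ) : ℝ :=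
  Q * Real.exp (-γ * x) * ∫ s in (0:ℝ)..x, Real.exp (γ * s) * θ s * Real.exp (-Q * Lam θ x s)

/-!
Since `Λ(x,s)` has `s`-derivative `-θ(s)`, the integrand `Q θ(s) e^{-QΛ(x,s)}` is the
derivative of `e^{-QΛ(x,s)}`, so `Q ∫₀^x θ(s) e^{-QΛ(x,s)} ds = 1 - e^{-QΛ(x,0)}`. Bounding
`e^{γs}` by `e^{γx}` therefore gives `w(x;Q) ≤ 1 - e^{-QΛ(A,0)} < 1` uniformly on `[0,A]`, and
averaging against the probability density `p/N` yields `Q < 1`.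
-/

section Lam

variable {θ : ℝ → ℝ} {a b : ℝ}

theorem continuousOn_Lam (hab : a ≤ b) (hθ : ContinuousOn θ (Icc a b)) :
    ContinuousOn (Lam θ b) (Icc a b) := by
  have hint : IntegrableOn θ (uIcc a b) := by
    rw [uIcc_of_le hab]; exact hθ.integrableOn_Icc
  have := intervalIntegral.continuousOn_primitive_interval_left hint
  rwa [uIcc_of_le hab] at this

theorem hasDerivAt_Lam {s : ℝ} (hθ : ContinuousOn θ (Icc a b)) (hs : s ∈ Ioo a b) :
    HasDerivAt (Lam θ b) (-θ s) s :=
  intervalIntegral.integral_hasDerivAt_left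
    ((hθ.mono (Icc_subset_Icc_left hs.1.le)).intervalIntegrable_of_Icc hs.2.le)
    (hθ.mono Ioo_subset_Icc_self |>.stronglyMeasurableAtFilter isOpen_Ioo s hs)
    (hθ.continuousAt (Icc_mem_nhds hs.1 hs.2))

theorem Lam_le_Lam {x : ℝ} (hax : a ≤ x) (hxb : x ≤ b) (hθc : ContinuousOn θ (Icc a b))
    (hθ : ∀ t ∈ Icc a b, 0 ≤ θ t) : Lam θ x a ≤ Lam θ b a :=
  intervalIntegral.integral_mono_interval le_rfl hax hxb
    ((ae_restrict_iff' measurableSet_Ioc).2 <|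
      ae_of_all _ fun t ht => hθ t (Ioc_subset_Icc_self ht))
    (hθc.intervalIntegrable_of_Icc (hax.trans hxb))

theorem mul_integral_mul_exp_neg_mul_Lam (hab : a ≤ b) (hθ : ContinuousOn θ (Icc a b))
    (Q : ℝ) :
    Q * ∫ s in a..b, θ s * exp (-Q * Lam θ b s) = 1 - exp (-Q * Lam θ b a) := by
  have hexp : ContinuousOn (fun s => exp (-Q * Lam θ b s)) (Icc a b) :=
    (continuousOn_const.mul (continuousOn_Lam hab hθ)).rexp
  have hderiv : ∀ s ∈ Ioo a b,
      HasDerivAt (fun s => exp (-Q * Lam θ b s)) (Q * (θ s * exp (-Q * Lam θ b s))) s := by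
    intro s hs
    convert ((hasDerivAt_Lam hθ hs).const_mul (-Q)).exp using 1
    ring
  rw [← intervalIntegral.integral_const_mul,
    intervalIntegral.integral_eq_sub_of_hasDerivAt_of_le hab hexp hderiv
      ((continuousOn_const.mul (hθ.mul hexp)).intervalIntegrable_of_Icc hab)]
  simp [Lam]

end Lam

section w

variable {γ Q x : ℝ} {θ : ℝ → ℝ}

theorem w_nonneg (hQ : 0 ≤ Q) (hx : 0 ≤ x) (hθ : ∀ s ∈ Icc 0 x, 0 ≤ θ s) :
    0 ≤ w γ θ Q x := by
  have hint : 0 ≤ ∫ s in (0:ℝ)..x, exp (γ * s) * θ s * exp (-Q * Lam θ x s) :=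
    intervalIntegral.integral_nonneg hx fun s hs => by have := hθ s hs; positivity
  unfold w
  positivity

theorem w_le_one_sub_exp (hγ : 0 ≤ γ) (hQ : 0 ≤ Q) (hx : 0 ≤ x)
    (hθc : ContinuousOn θ (Icc 0 x)) (hθ : ∀ s ∈ Icc 0 x, 0 ≤ θ s) :
    w γ θ Q x ≤ 1 - exp (-Q * Lam θ x 0) := by
  have hexp : ContinuousOn (fun s => exp (-Q * Lam θ x s)) (Icc 0 x) :=
    (continuousOn_const.mul (continuousOn_Lam hx hθc)).rexp
  have hmono : ∫ s in (0:ℝ)..x, exp (γ * s) * θ s * exp (-Q * Lam θ x s) ≤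
      ∫ s in (0:ℝ)..x, exp (γ * x) * (θ s * exp (-Q * Lam θ x s)) := by
    have hexpγ : ContinuousOn (fun s => exp (γ * s)) (Icc 0 x) := by fun_prop
    refine intervalIntegral.integral_mono_on hx
      (((hexpγ.mul hθc).mul hexp).intervalIntegrable_of_Icc hx)
      ((continuousOn_const.mul (hθc.mul hexp)).intervalIntegrable_of_Icc hx) fun s hs => ?_
    rw [← mul_assoc]
    have := hθ s hs
    gcongr
    exact hs.2
  calc w γ θ Q x
      ≤ Q * exp (-γ * x) *
          ∫ s in (0:ℝ)..x, exp (γ * x) * (θ s * exp (-Q * Lam θ x s)) := by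
        unfold w; gcongr
    _ = Q * ∫ s in (0:ℝ)..x, θ s * exp (-Q * Lam θ x s) := by
        rw [intervalIntegral.integral_const_mul, ← mul_assoc, mul_assoc Q, ← exp_add]
        simp
    _ = 1 - exp (-Q * Lam θ x 0) := mul_integral_mul_exp_neg_mul_Lam hx hθc Q

theorem w_le_one_sub_exp_Lam_right {A : ℝ} (hγ : 0 ≤ γ) (hQ : 0 ≤ Q) (hx : x ∈ Icc 0 A)
    (hθc : ContinuousOn θ (Icc 0 A)) (hθ : ∀ s ∈ Icc 0 A, 0 ≤ θ s) :
    w γ θ Q x ≤ 1 - exp (-Q * Lam θ A 0) := by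
  have hsub : Icc 0 x ⊆ Icc 0 A := Icc_subset_Icc_right hx.2
  have hLam := mul_le_mul_of_nonneg_left (Lam_le_Lam hx.1 hx.2 hθc hθ) hQ
  calc w γ θ Q x ≤ 1 - exp (-Q * Lam θ x 0) :=
        w_le_one_sub_exp hγ hQ hx.1 (hθc.mono hsub) fun s hs => hθ s (hsub hs)
    _ ≤ 1 - exp (-Q * Lam θ A 0) := sub_le_sub_left (exp_le_exp.2 (by linarith)) 1

end w

theorem integral_mul_le_const_mul_integral {f p : ℝ → ℝ} {a b C : ℝ} (hab : a ≤ b)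
    (hp : IntervalIntegrable p volume a b) (hp0 : ∀ x ∈ Icc a b, 0 ≤ p x)
    (hf0 : ∀ x ∈ Icc a b, 0 ≤ f x) (hfC : ∀ x ∈ Icc a b, f x ≤ C) :
    ∫ x in a..b, p x * f x ≤ C * ∫ x in a..b, p x := by
  rw [intervalIntegral.integral_of_le hab, intervalIntegral.integral_of_le hab,
    ← integral_const_mul]
  refine setIntegral_mono_of_nonneg (fun x hx => ?_) (fun x hx => ?_) (hp.1.const_mul C) <;>
    replace hx := Ioc_subset_Icc_self hx
  · exact mul_nonneg (hp0 x hx) (hf0 x hx)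
  · rw [mul_comm C]; exact mul_le_mul_of_nonneg_left (hfC x hx) (hp0 x hx)

/-- a positive solution of `Q = (1/N)∫₀^A p(x) w(x;Q) dx` satisfies `Q < 1`. -/
theorem fixed_point_lt_one (γ A N : ℝ) (hγ : 0 < γ) (hA : 0 < A) (hN : 0 < N)
    (θ p : ℝ → ℝ)
    (hθc : ContinuousOn θ (Set.Icc 0 A)) (hθpos : ∀ x ∈ Set.Icc 0 A, 0 < θ x)
    (hpc : ContinuousOn p (Set.Icc 0 A)) (hppos : ∀ x ∈ Set.Icc 0 A, 0 < p x)
    (hnorm : (1/N) * ∫ x in (0:ℝ)..A, p x = 1)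
    (Q : ℝ) (hQ : 0 < Q)
    (hfix : Q = (1/N) * ∫ x in (0:ℝ)..A, p x * w γ θ Q x) :
    Q < 1 := by
  have hθ : ∀ x ∈ Icc 0 A, 0 ≤ θ x := fun x hx => (hθpos x hx).le
  have hint : ∫ x in (0:ℝ)..A, p x * w γ θ Q x ≤
      (1 - exp (-Q * Lam θ A 0)) * ∫ x in (0:ℝ)..A, p x :=
    integral_mul_le_const_mul_integral hA.le (hpc.intervalIntegrable_of_Icc hA.le)
      (fun x hx => (hppos x hx).le)
      (fun x hx => w_nonneg hQ.le hx.1 fun s hs => hθ s ⟨hs.1, hs.2.trans hx.2⟩)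
      (fun x hx => w_le_one_sub_exp_Lam_right hγ.le hQ.le hx hθc hθ)
  calc Q ≤ 1 / N * ((1 - exp (-Q * Lam θ A 0)) * ∫ x in (0:ℝ)..A, p x) :=
        hfix.trans_le (by gcongr)
    _ = 1 - exp (-Q * Lam θ A 0) := by rw [mul_left_comm, hnorm, mul_one]
    _ < 1 := sub_lt_self 1 (exp_pos _)
end

section
/- For all x ∈ [0,A], one has w(x;1) < 1 - γ/(γ + θ_max), where θ_max = max_{x∈[0,A]} θ(x). -/
open MeasureTheory Real Set Filter

/-!
Since `s ↦ e^{γs - QΛ(x,s)}` has derivative `(γ + Qθ(s)) e^{γs - QΛ(x,s)}`, the integral of the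
latter over `[0,x]` is `e^{γx} - e^{-QΛ(x,0)} < e^{γx}`. If `θ ≤ M` and `c = QM/(γ + QM)`, then
`Qθ ≤ c (γ + Qθ)` because `t ↦ t/(γ + t)` is monotone, so `w(x;Q) < c = 1 - γ/(γ + QM)`.
-/

lemma ContinuousOn.exists_continuous_eqOn_Icc {f : ℝ → ℝ} {a b : ℝ} (hab : a ≤ b)
    (hf : ContinuousOn f (Icc a b)) : ∃ g : ℝ → ℝ, Continuous g ∧ EqOn g f (Icc a b) :=
  ⟨IccExtend hab ((Icc a b).domRestrict f),
    (continuousOn_iff_continuous_domRestrict.1 hf).Icc_extend', fun _ hs => IccExtend_of_mem hab _ hs⟩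

lemma le_div_add_mul_add {a b γ : ℝ} (hab : a ≤ b) (hγ : 0 ≤ γ) (hb : 0 < γ + b) :
    a ≤ b / (γ + b) * (γ + a) := by
  rw [div_mul_eq_mul_div, le_div_iff₀ hb]
  nlinarith

section

variable {γ Q x : ℝ} {θ : ℝ → ℝ}

lemma Lam_self : Lam θ x x = 0 := intervalIntegral.integral_same

lemma w_congr {θ' : ℝ → ℝ} (hx : 0 ≤ x) (h : EqOn θ θ' (Icc 0 x)) :
    w γ θ Q x = w γ θ' Q x := by
  unfold w Lam
  congr 1
  refine intervalIntegral.integral_congr fun s hs => ?_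
  rw [uIcc_of_le hx] at hs
  have hsub : uIcc s x ⊆ Icc 0 x := by
    rw [uIcc_of_le hs.2]
    exact Icc_subset_Icc_left hs.1
  rw [h hs, intervalIntegral.integral_congr (h.mono hsub)]

lemma hasDerivAt_Lam_left (hθ : Continuous θ) (s : ℝ) : HasDerivAt (Lam θ x) (-θ s) s :=
  intervalIntegral.integral_hasDerivAt_left (hθ.intervalIntegrable _ _)
    (hθ.stronglyMeasurableAtFilter _ _) hθ.continuousAt

lemma continuous_Lam (hθ : Continuous θ) : Continuous (Lam θ x) :=
  continuous_iff_continuousAt.2 fun s => (hasDerivAt_Lam_left hθ s).continuousAt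

lemma hasDerivAt_exp_sub_Lam (hθ : Continuous θ) (s : ℝ) :
    HasDerivAt (fun s => exp (γ * s - Q * Lam θ x s))
      ((γ + Q * θ s) * exp (γ * s - Q * Lam θ x s)) s := by
  have h : HasDerivAt (fun s => γ * s - Q * Lam θ x s) (γ + Q * θ s) s := by
    simpa using ((hasDerivAt_id s).const_mul γ).fun_sub ((hasDerivAt_Lam_left hθ s).const_mul Q)
  simpa [mul_comm] using h.exp

lemma integral_exp_sub_Lam (hθ : Continuous θ) :
    ∫ s in (0:ℝ)..x, (γ + Q * θ s) * exp (γ * s - Q * Lam θ x s)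
      = exp (γ * x) - exp (-(Q * Lam θ x 0)) := by
  have := continuous_Lam (x := x) hθ
  rw [intervalIntegral.integral_eq_sub_of_hasDerivAt (fun s _ => hasDerivAt_exp_sub_Lam hθ s)
    (Continuous.intervalIntegrable (by fun_prop) _ _), Lam_self]
  simp

lemma w_eq_exp_mul_integral :
    w γ θ Q x = exp (-γ * x) * ∫ s in (0:ℝ)..x, Q * θ s * exp (γ * s - Q * Lam θ x s) := by
  rw [w, mul_comm Q, mul_assoc, ← intervalIntegral.integral_const_mul]
  congr 1
  refine intervalIntegral.integral_congr fun s _ => ?_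
  rw [sub_eq_add_neg, exp_add]
  ring_nf

theorem w_lt_one_sub_div {M : ℝ} (hγ : 0 ≤ γ) (hQ : 0 < Q) (hM : 0 < M) (hθ : Continuous θ)
    (hx : 0 ≤ x) (hθM : ∀ s ∈ Icc 0 x, θ s ≤ M) : w γ θ Q x < 1 - γ / (γ + Q * M) := by
  have hQM : 0 < Q * M := mul_pos hQ hM
  have hc_eq : 1 - γ / (γ + Q * M) = Q * M / (γ + Q * M) := by
    rw [one_sub_div (by positivity), add_sub_cancel_left]
  set c := Q * M / (γ + Q * M)
  have hc : 0 < c := by positivity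
  have hθ_le (s : ℝ) (hs : s ∈ Icc 0 x) : Q * θ s ≤ c * (γ + Q * θ s) :=
    le_div_add_mul_add (mul_le_mul_of_nonneg_left (hθM s hs) hQ.le) hγ (by linarith)
  rw [hc_eq]
  calc w γ θ Q x
      = exp (-γ * x) * ∫ s in (0:ℝ)..x, Q * θ s * exp (γ * s - Q * Lam θ x s) :=
        w_eq_exp_mul_integral
    _ ≤ exp (-γ * x) * ∫ s in (0:ℝ)..x, c * ((γ + Q * θ s) * exp (γ * s - Q * Lam θ x s)) := by
        have := continuous_Lam (x := x) hθ
        gcongr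
        refine intervalIntegral.integral_mono_on hx
          (Continuous.intervalIntegrable (by fun_prop) _ _)
          (Continuous.intervalIntegrable (by fun_prop) _ _) fun s hs => ?_
        rw [← mul_assoc]
        exact mul_le_mul_of_nonneg_right (hθ_le s hs) (exp_pos _).le
    _ = c * (1 - exp (-γ * x) * exp (-(Q * Lam θ x 0))) := by
        have h_inv : exp (-γ * x) * exp (γ * x) = 1 := by rw [← exp_add]; simp
        rw [intervalIntegral.integral_const_mul, integral_exp_sub_Lam hθ]
        linear_combination c * h_inv
    _ < c := by
        have := mul_pos (exp_pos (-γ * x)) (exp_pos (-(Q * Lam θ x 0)))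
        nlinarith

end

theorem w_one_bound_general (γ A : ℝ) (hγ : 0 < γ) (θ : ℝ → ℝ)
    (hθc : ContinuousOn θ (Set.Icc 0 A)) (hθpos : ∀ x ∈ Set.Icc 0 A, 0 < θ x)
    (θmax : ℝ) (hθmax : IsGreatest (θ '' Set.Icc 0 A) θmax) :
    ∀ x ∈ Set.Icc 0 A, w γ θ 1 x < 1 - γ / (γ + θmax) := by
  intro x hx
  have h0A : (0 : ℝ) ∈ Icc 0 A := ⟨le_rfl, hx.1.trans hx.2⟩
  have hθmax_pos : 0 < θmax := (hθpos 0 h0A).trans_le (hθmax.2 (mem_image_of_mem θ h0A))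
  obtain ⟨θ', hθ'c, hθ'θ⟩ := hθc.exists_continuous_eqOn_Icc h0A.2
  have hθ'θx : EqOn θ' θ (Icc 0 x) := hθ'θ.mono (Icc_subset_Icc_right hx.2)
  rw [← w_congr hx.1 hθ'θx]
  simpa using w_lt_one_sub_div hγ.le one_pos hθmax_pos hθ'c hx.1 fun s hs =>
    (hθ'θx hs).trans_le (hθmax.2 (mem_image_of_mem θ (Icc_subset_Icc_right hx.2 hs)))

/-- `w(x;1) < 1 - γ/(γ + θ_max)` for all `x ∈ [0,A]`. -/
theorem w_one_bound (γ A : ℝ) (hγ : 0 < γ) (hA : 0 < A) (θ : ℝ → ℝ)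
    (hθc : ContinuousOn θ (Set.Icc 0 A)) (hθpos : ∀ x ∈ Set.Icc 0 A, 0 < θ x)
    (θmax : ℝ) (hθmax : IsGreatest (θ '' Set.Icc 0 A) θmax) :
    ∀ x ∈ Set.Icc 0 A, w γ θ 1 x < 1 - γ / (γ + θmax) :=
  w_one_bound_general γ A hγ θ hθc hθpos θmax hθmax
end

section
/- If 0 < R₀ ≤ 1, then F(Q) > 0 for every Q ∈ (0,1]; i.e., the fixed point problem Q = Q ∬_Ω k(x,s) e^{-Q Λ(x,s)} d(s,x) has only the trivial solution Q = 0 in the interval [0,1]. -/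
open MeasureTheory Real Set Filter

/-- The kernel `k(x,s) = (p(x)/N)·θ(s)·e^{-γ(x-s)}`. -/
noncomputable def kker (γ N : ℝ) (p θ : ℝ → ℝ) (x s : ℝ) : ℝ :=
  (p x / N) * θ s * Real.exp (-γ * (x - s))

/-- The triangle `Ω = {(x,s) : 0 ≤ s ≤ x ≤ A}` (first coordinate `x`, second `s`). -/
def Tri (A : ℝ) : Set (ℝ × ℝ) := {q | 0 ≤ q.2 ∧ q.2 ≤ q.1 ∧ q.1 ≤ A}

/-- Basic reproductive number `R₀ = ∬_Ω k(x,s) d(s,x)`. -/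
noncomputable def R0 (γ N A : ℝ) (p θ : ℝ → ℝ) : ℝ :=
  ∫ q in Tri A, kker γ N p θ q.1 q.2

/-- `F(Q) = 1 - ∬_Ω k(x,s) e^{-Q Λ(x,s)} d(s,x)`. -/
noncomputable def FF (γ N A : ℝ) (p θ : ℝ → ℝ) (Q : ℝ) : ℝ :=
  1 - ∫ q in Tri A, kker γ N p θ q.1 q.2 * Real.exp (-Q * Lam θ q.1 q.2)

/-- Iteration map `T(Q) = Q·(1 - F(Q))`. -/
noncomputable def TT (γ N A : ℝ) (p θ : ℝ → ℝ) (Q : ℝ) : ℝ :=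
  Q * (1 - FF γ N A p θ Q)

lemma isClosed_Tri (A : ℝ) : IsClosed (Tri A) := by
  have h : Tri A = {q : ℝ×ℝ | 0 ≤ q.2} ∩ ({q | q.2 ≤ q.1} ∩ {q | q.1 ≤ A}) := by
    ext q; simp [Tri, and_assoc]
  rw [h]
  exact (isClosed_le continuous_const continuous_snd).inter
    ((isClosed_le continuous_snd continuous_fst).inter
      (isClosed_le continuous_fst continuous_const))

lemma isCompact_Tri (A : ℝ) : IsCompact (Tri A) := by
  refine (isCompact_Icc (a := ((0:ℝ),(0:ℝ))) (b := (A,A))).of_isClosed_subset (isClosed_Tri A) ?_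
  rintro ⟨x,s⟩ ⟨h1,h2,h3⟩
  exact ⟨⟨le_trans h1 h2, h1⟩, ⟨h3, le_trans h2 h3⟩⟩

lemma Tri_fst_mem {A : ℝ} {q : ℝ × ℝ} (h : q ∈ Tri A) : q.1 ∈ Icc 0 A :=
  ⟨le_trans h.1 h.2.1, h.2.2⟩

lemma Tri_snd_mem {A : ℝ} {q : ℝ × ℝ} (h : q ∈ Tri A) : q.2 ∈ Icc 0 A :=
  ⟨h.1, le_trans h.2.1 h.2.2⟩

lemma integral_lt_one {γ A N : ℝ} {θ p : ℝ → ℝ} (hγ : 0 < γ) (hA : 0 < A) (hN : 0 < N)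
    (hθc : ContinuousOn θ (Icc 0 A)) (hθpos : ∀ x ∈ Icc 0 A, 0 < θ x)
    (hpc : ContinuousOn p (Icc 0 A)) (hppos : ∀ x ∈ Icc 0 A, 0 < p x)
    (hR0le : R0 γ N A p θ ≤ 1) {Q : ℝ} (hQ : 0 < Q) :
    ∫ q in Tri A, kker γ N p θ q.1 q.2 * Real.exp (-Q * Lam θ q.1 q.2) < 1 := by
  -- clamped extension of θ
  set c : ℝ → ℝ := fun t => max 0 (min t A) with hc
  have hcCont : Continuous c := continuous_const.max (continuous_id.min continuous_const)
  have hcmem : ∀ t, c t ∈ Icc 0 A := fun t =>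
    ⟨le_max_left _ _, max_le hA.le (le_trans (min_le_right _ _) le_rfl)⟩
  have hceq : ∀ t ∈ Icc 0 A, c t = t := by
    intro t ht
    simp [hc, min_eq_left ht.2, max_eq_right ht.1]
  set θ' : ℝ → ℝ := fun t => θ (c t) with hθ'
  have hθ'c : Continuous θ' := hθc.comp_continuous hcCont hcmem
  have hθ'eq : ∀ t ∈ Icc 0 A, θ' t = θ t := fun t ht => by simp [hθ', hceq t ht]
  -- Lam equals integral of θ' on Tri
  have hLam_eq : ∀ q ∈ Tri A, Lam θ q.1 q.2 = ∫ t in q.2..q.1, θ' t := by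
    intro q hq
    refine intervalIntegral.integral_congr ?_
    intro t ht
    rw [uIcc_of_le hq.2.1] at ht
    exact (hθ'eq t ⟨le_trans hq.1 ht.1, le_trans ht.2 hq.2.2⟩).symm
  -- continuity of the primitive
  have hprim : Continuous (fun y : ℝ => ∫ t in (0:ℝ)..y, θ' t) :=
    intervalIntegral.continuous_primitive (fun a b => hθ'c.intervalIntegrable a b) 0
  have hLamCont : ContinuousOn (fun q : ℝ × ℝ => Lam θ q.1 q.2) (Tri A) := by
    have : ContinuousOn (fun q : ℝ × ℝ => (∫ t in (0:ℝ)..q.1, θ' t) - ∫ t in (0:ℝ)..q.2, θ' t)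
        (Tri A) := ((hprim.comp continuous_fst).sub (hprim.comp continuous_snd)).continuousOn
    refine this.congr ?_
    intro q hq
    show Lam θ q.1 q.2 = _
    rw [hLam_eq q hq, ← intervalIntegral.integral_interval_sub_left
      (hθ'c.intervalIntegrable 0 q.1) (hθ'c.intervalIntegrable 0 q.2)]
  -- kernel continuity
  have hkCont : ContinuousOn (fun q : ℝ × ℝ => kker γ N p θ q.1 q.2) (Tri A) := by
    have h1 : ContinuousOn (fun q : ℝ × ℝ => p q.1) (Tri A) :=
      hpc.comp continuous_fst.continuousOn (fun q hq => Tri_fst_mem hq)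
    have h2 : ContinuousOn (fun q : ℝ × ℝ => θ q.2) (Tri A) :=
      hθc.comp continuous_snd.continuousOn (fun q hq => Tri_snd_mem hq)
    have h3 : Continuous (fun q : ℝ × ℝ => Real.exp (-γ * (q.1 - q.2))) :=
      Real.continuous_exp.comp ((continuous_const).mul (continuous_fst.sub continuous_snd))
    exact ((h1.div_const N).mul h2).mul h3.continuousOn
  have hfCont : ContinuousOn
      (fun q : ℝ × ℝ => kker γ N p θ q.1 q.2 * Real.exp (-Q * Lam θ q.1 q.2)) (Tri A) :=
    hkCont.mul (Real.continuous_exp.comp_continuousOn (continuousOn_const.mul hLamCont))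
  have hki : IntegrableOn (fun q : ℝ × ℝ => kker γ N p θ q.1 q.2) (Tri A) :=
    hkCont.integrableOn_compact (isCompact_Tri A)
  have hfi : IntegrableOn
      (fun q : ℝ × ℝ => kker γ N p θ q.1 q.2 * Real.exp (-Q * Lam θ q.1 q.2)) (Tri A) :=
    hfCont.integrableOn_compact (isCompact_Tri A)
  -- nonnegativity and positivity facts
  have hknn : ∀ q ∈ Tri A, 0 ≤ kker γ N p θ q.1 q.2 := by
    intro q hq
    have := (hppos _ (Tri_fst_mem hq)).le
    have := (hθpos _ (Tri_snd_mem hq)).le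
    unfold kker
    positivity
  have hLamnn : ∀ q ∈ Tri A, 0 ≤ Lam θ q.1 q.2 := by
    intro q hq
    unfold Lam
    refine intervalIntegral.integral_nonneg hq.2.1 ?_
    intro t ht
    exact (hθpos t ⟨le_trans hq.1 ht.1, le_trans ht.2 hq.2.2⟩).le
  -- difference function
  set g : ℝ × ℝ → ℝ := fun q =>
    kker γ N p θ q.1 q.2 - kker γ N p θ q.1 q.2 * Real.exp (-Q * Lam θ q.1 q.2) with hg
  have hgnn : ∀ q ∈ Tri A, 0 ≤ g q := by
    intro q hq
    have h1 : Real.exp (-Q * Lam θ q.1 q.2) ≤ 1 := by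
      rw [Real.exp_le_one_iff]
      have := hLamnn q hq
      nlinarith
    have h2 := hknn q hq
    have : kker γ N p θ q.1 q.2 * Real.exp (-Q * Lam θ q.1 q.2) ≤ kker γ N p θ q.1 q.2 * 1 :=
      mul_le_mul_of_nonneg_left h1 h2
    simp only [hg]; linarith [this]
  have hgi : IntegrableOn g (Tri A) := hki.sub hfi
  -- open subset of support
  have hO : IsOpen {q : ℝ × ℝ | 0 < q.2 ∧ q.2 < q.1 ∧ q.1 < A} := by
    have h1 : IsOpen {q : ℝ × ℝ | 0 < q.2} := isOpen_lt continuous_const continuous_snd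
    have h2 : IsOpen {q : ℝ × ℝ | q.2 < q.1} := isOpen_lt continuous_snd continuous_fst
    have h3 : IsOpen {q : ℝ × ℝ | q.1 < A} := isOpen_lt continuous_fst continuous_const
    have : {q : ℝ × ℝ | 0 < q.2 ∧ q.2 < q.1 ∧ q.1 < A}
        = {q : ℝ × ℝ | 0 < q.2} ∩ ({q | q.2 < q.1} ∩ {q | q.1 < A}) := by
      ext q; simp [and_assoc]
    rw [this]; exact h1.inter (h2.inter h3)
  have hOne : Set.Nonempty {q : ℝ × ℝ | 0 < q.2 ∧ q.2 < q.1 ∧ q.1 < A} := by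
    refine ⟨(2*A/3, A/3), ?_, ?_, ?_⟩ <;> simp <;> linarith
  have hOsub : {q : ℝ × ℝ | 0 < q.2 ∧ q.2 < q.1 ∧ q.1 < A} ⊆ Function.support g ∩ Tri A := by
    rintro ⟨x,s⟩ ⟨h1, h2, h3⟩
    have hqTri : (x,s) ∈ Tri A := ⟨h1.le, h2.le, h3.le⟩
    refine ⟨?_, hqTri⟩
    have hLampos : 0 < Lam θ x s := by
      unfold Lam
      refine intervalIntegral.intervalIntegral_pos_of_pos_on ?_ ?_ h2
      · refine (hθc.mono ?_).intervalIntegrable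
        rw [uIcc_of_le h2.le]
        exact Icc_subset_Icc h1.le h3.le
      · intro t ht
        exact hθpos t ⟨le_trans h1.le ht.1.le, le_trans ht.2.le h3.le⟩
    have hexp : Real.exp (-Q * Lam θ x s) < 1 := by
      rw [Real.exp_lt_one_iff]
      nlinarith
    have hkpos : 0 < kker γ N p θ x s := by
      have h4 := hppos _ (Tri_fst_mem hqTri)
      have h5 := hθpos _ (Tri_snd_mem hqTri)
      unfold kker
      positivity
    have : kker γ N p θ x s * Real.exp (-Q * Lam θ x s) < kker γ N p θ x s * 1 :=
      mul_lt_mul_of_pos_left hexp hkpos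
    simp only [hg, Function.mem_support]
    intro hcon
    rw [mul_one] at this
    nlinarith [sub_eq_zero.mp hcon]
  have hgpos : 0 < ∫ q in Tri A, g q := by
    rw [MeasureTheory.setIntegral_pos_iff_support_of_nonneg_ae
      (ae_restrict_of_forall_mem (isClosed_Tri A).measurableSet hgnn) hgi]
    exact lt_of_lt_of_le (hO.measure_pos volume hOne) (measure_mono hOsub)
  have hsplit : ∫ q in Tri A, g q
      = (∫ q in Tri A, kker γ N p θ q.1 q.2)
        - ∫ q in Tri A, kker γ N p θ q.1 q.2 * Real.exp (-Q * Lam θ q.1 q.2) :=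
    integral_sub hki hfi
  have : ∫ q in Tri A, kker γ N p θ q.1 q.2 * Real.exp (-Q * Lam θ q.1 q.2)
      < ∫ q in Tri A, kker γ N p θ q.1 q.2 := by linarith [hsplit ▸ hgpos]
  calc ∫ q in Tri A, kker γ N p θ q.1 q.2 * Real.exp (-Q * Lam θ q.1 q.2)
      < R0 γ N A p θ := this
    _ ≤ 1 := hR0le

/-- if `0 < R₀ ≤ 1` then `F > 0` on `(0,1]`; hence the fixed point
problem has only the trivial solution in `[0,1]`. -/
theorem only_trivial_solution (γ A N : ℝ) (hγ : 0 < γ) (hA : 0 < A) (hN : 0 < N)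
    (θ p : ℝ → ℝ)
    (hθc : ContinuousOn θ (Set.Icc 0 A)) (hθpos : ∀ x ∈ Set.Icc 0 A, 0 < θ x)
    (hpc : ContinuousOn p (Set.Icc 0 A)) (hppos : ∀ x ∈ Set.Icc 0 A, 0 < p x)
    (hnorm : (1/N) * ∫ x in (0:ℝ)..A, p x = 1)
    (hR0pos : 0 < R0 γ N A p θ) (hR0le : R0 γ N A p θ ≤ 1) :
    (∀ Q ∈ Set.Ioc (0:ℝ) 1, 0 < FF γ N A p θ Q) ∧
    (∀ Q ∈ Set.Icc (0:ℝ) 1,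
      Q = Q * ∫ q in Tri A, kker γ N p θ q.1 q.2 * Real.exp (-Q * Lam θ q.1 q.2) →
      Q = 0) := by
  constructor
  · intro Q hQ
    have h := integral_lt_one hγ hA hN hθc hθpos hpc hppos hR0le hQ.1
    unfold FF
    linarith
  · intro Q hQ heq
    by_contra hQ0
    have hQpos : 0 < Q := lt_of_le_of_ne hQ.1 (Ne.symm hQ0)
    have h1 := integral_lt_one hγ hA hN hθc hθpos hpc hppos hR0le hQpos
    have h2 : Q * (∫ q in Tri A, kker γ N p θ q.1 q.2 * Real.exp (-Q * Lam θ q.1 q.2)) < Q * 1 :=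
      mul_lt_mul_of_pos_left h1 hQpos
    rw [mul_one] at h2
    linarith [heq ▸ h2]
end

section
/- If Q* ∈ (0,1) satisfies F(Q*) = 0, then the derivative of the iteration map T at Q* satisfies T'(Q*) < 1. -/
open MeasureTheory Real Set Filter Topology

/-- at a non-trivial fixed point `Q*`, `T'(Q*) < 1`. -/
theorem T_deriv_lt_one (γ A N : ℝ) (hγ : 0 < γ) (hA : 0 < A) (hN : 0 < N)
    (θ p : ℝ → ℝ)
    (hθc : ContinuousOn θ (Set.Icc 0 A)) (hθpos : ∀ x ∈ Set.Icc 0 A, 0 < θ x)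
    (hpc : ContinuousOn p (Set.Icc 0 A)) (hppos : ∀ x ∈ Set.Icc 0 A, 0 < p x)
    (hnorm : (1/N) * ∫ x in (0:ℝ)..A, p x = 1)
    (Qstar : ℝ) (hQmem : Qstar ∈ Set.Ioo (0:ℝ) 1) (hQroot : FF γ N A p θ Qstar = 0) :
    deriv (TT γ N A p θ) Qstar < 1 := by
  obtain ⟨hQ0, hQ1⟩ := hQmem
  -- basic facts about the triangle
  have hmem1 : ∀ q ∈ Tri A, q.1 ∈ Set.Icc 0 A := by
    rintro q ⟨h1, h2, h3⟩; exact ⟨le_trans h1 h2, h3⟩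
  have hmem2 : ∀ q ∈ Tri A, q.2 ∈ Set.Icc 0 A := by
    rintro q ⟨h1, h2, h3⟩; exact ⟨h1, le_trans h2 h3⟩
  have hTriClosed : IsClosed (Tri A) := by
    have : Tri A = {q : ℝ × ℝ | 0 ≤ q.2} ∩ ({q : ℝ × ℝ | q.2 ≤ q.1} ∩ {q : ℝ × ℝ | q.1 ≤ A}) := by
      ext q; simp [Tri, and_assoc]
    rw [this]
    exact (isClosed_le continuous_const continuous_snd).inter
      ((isClosed_le continuous_snd continuous_fst).inter
        (isClosed_le continuous_fst continuous_const))
  have hTriM : MeasurableSet (Tri A) := hTriClosed.measurableSet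
  have hTriCompact : IsCompact (Tri A) := by
    refine IsCompact.of_isClosed_subset (isCompact_Icc (a := ((0:ℝ), (0:ℝ))) (b := (A, A)))
      hTriClosed ?_
    intro q hq
    have h1 := hmem1 q hq; have h2 := hmem2 q hq
    exact ⟨⟨h1.1, h2.1⟩, ⟨h1.2, h2.2⟩⟩
  -- interval integrability of θ
  have hθint : ∀ s ∈ Set.Icc (0:ℝ) A, ∀ x ∈ Set.Icc (0:ℝ) A, IntervalIntegrable θ volume s x := by
    intro s hs x hx
    exact (hθc.mono (Set.uIcc_subset_Icc hs hx)).intervalIntegrable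
  -- the primitive H
  set H : ℝ → ℝ := fun y => ∫ t in (0:ℝ)..y, θ t with hHdef
  have hHc : ContinuousOn H (Set.Icc 0 A) := by
    have h0 : IntegrableOn θ (Set.uIcc 0 A) := by
      rw [Set.uIcc_of_le hA.le]; exact hθc.integrableOn_Icc
    have := intervalIntegral.continuousOn_primitive_interval (a := (0:ℝ)) (b := A)
      (f := θ) (μ := volume) h0
    rwa [Set.uIcc_of_le hA.le] at this
  have h0A : (0:ℝ) ∈ Set.Icc (0:ℝ) A := ⟨le_refl _, hA.le⟩
  have hLam_eq : ∀ q ∈ Tri A, Lam θ q.1 q.2 = H q.1 - H q.2 := by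
    intro q hq
    exact (intervalIntegral.integral_interval_sub_left
      (hθint 0 h0A q.1 (hmem1 q hq)) (hθint 0 h0A q.2 (hmem2 q hq))).symm
  -- continuity of Lam on the triangle
  set L : ℝ × ℝ → ℝ := fun q => Lam θ q.1 q.2 with hLdef
  have hLC : ContinuousOn L (Tri A) := by
    have h1 : ContinuousOn (fun q : ℝ × ℝ => H q.1 - H q.2) (Tri A) :=
      (hHc.comp continuous_fst.continuousOn hmem1).sub
        (hHc.comp continuous_snd.continuousOn hmem2)
    exact h1.congr hLam_eq
  have hLnn : ∀ q ∈ Tri A, 0 ≤ L q := by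
    rintro q ⟨h1, h2, h3⟩
    apply intervalIntegral.integral_nonneg h2
    intro u hu
    exact (hθpos u ⟨le_trans h1 hu.1, le_trans hu.2 h3⟩).le
  -- continuity and nonnegativity of the kernel on the triangle
  set k : ℝ × ℝ → ℝ := fun q => kker γ N p θ q.1 q.2 with hkdef
  have hkC : ContinuousOn k (Tri A) := by
    simp only [hkdef, kker]
    refine ContinuousOn.mul (ContinuousOn.mul ?_ ?_) ?_
    · exact (hpc.comp continuous_fst.continuousOn hmem1).div_const N
    · exact hθc.comp continuous_snd.continuousOn hmem2
    · exact (Real.continuous_exp.comp (by fun_prop)).continuousOn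
  have hknn : ∀ q ∈ Tri A, 0 ≤ k q := by
    intro q hq
    have hp1 := hppos q.1 (hmem1 q hq)
    have hθ1 := hθpos q.2 (hmem2 q hq)
    have : 0 < k q := by
      simp only [hkdef, kker]
      positivity
    exact this.le
  -- the family of integrands and the integral G
  set ff : ℝ → ℝ × ℝ → ℝ := fun Q q => k q * Real.exp (-Q * L q) with hffdef
  have hffC : ∀ Q : ℝ, ContinuousOn (ff Q) (Tri A) := by
    intro Q
    exact hkC.mul (Real.continuous_exp.comp_continuousOn (continuousOn_const.mul hLC))
  have hffInt : ∀ Q : ℝ, IntegrableOn (ff Q) (Tri A) := fun Q =>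
    (hffC Q).integrableOn_compact hTriCompact
  set G : ℝ → ℝ := fun Q => ∫ q in Tri A, ff Q q with hGdef
  have hTTeq : ∀ Q : ℝ, TT γ N A p θ Q = Q * G Q := by
    intro Q; simp only [TT, FF, hGdef, hffdef, hkdef, hLdef]; rw [sub_sub_cancel]
  have hG1 : G Qstar = 1 := by
    have : (1:ℝ) - G Qstar = 0 := hQroot
    linarith
  -- the function g and the constant c
  set g : ℝ × ℝ → ℝ := fun q => k q * (L q * Real.exp (-L q)) with hgdef
  have hgC : ContinuousOn g (Tri A) :=
    hkC.mul (hLC.mul (Real.continuous_exp.comp_continuousOn hLC.neg))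
  have hgInt : IntegrableOn g (Tri A) := hgC.integrableOn_compact hTriCompact
  have hgnn : ∀ q ∈ Tri A, 0 ≤ g q := by
    intro q hq
    exact mul_nonneg (hknn q hq) (mul_nonneg (hLnn q hq) (Real.exp_pos _).le)
  set c : ℝ := ∫ q in Tri A, g q with hcdef
  -- positivity of c
  have hbox_sub : (Set.Ioo (A/2) A ×ˢ Set.Ioo (0:ℝ) (A/2)) ⊆ Function.support g ∩ Tri A := by
    rintro ⟨x, s⟩ ⟨⟨hx1, hx2⟩, hs1, hs2⟩
    have hsx : s < x := lt_trans hs2 hx1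
    have hqT : ((x, s) : ℝ × ℝ) ∈ Tri A := ⟨hs1.le, hsx.le, hx2.le⟩
    have hxI : x ∈ Set.Icc (0:ℝ) A := hmem1 _ hqT
    have hsI : s ∈ Set.Icc (0:ℝ) A := hmem2 _ hqT
    have hLpos : 0 < L (x, s) := by
      apply intervalIntegral.intervalIntegral_pos_of_pos_on (hθint s hsI x hxI)
      · intro u hu
        exact hθpos u ⟨le_trans hs1.le hu.1.le, le_trans hu.2.le hx2.le⟩
      · exact hsx
    have hkpos : 0 < k (x, s) := by
      have hp1 := hppos x hxI
      have hθ1 := hθpos s hsI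
      simp only [hkdef, kker]
      positivity
    refine ⟨?_, hqT⟩
    simp only [Function.mem_support, hgdef]
    positivity
  have hc : 0 < c := by
    rw [hcdef, setIntegral_pos_iff_support_of_nonneg_ae
      (ae_restrict_of_forall_mem hTriM hgnn) hgInt]
    refine lt_of_lt_of_le ?_ (measure_mono hbox_sub)
    rw [Measure.volume_eq_prod ℝ ℝ, Measure.prod_prod, Real.volume_Ioo, Real.volume_Ioo]
    apply ENNReal.mul_pos <;>
      · simp only [ne_eq, ENNReal.ofReal_eq_zero, not_le]
        linarith
  -- the key monotonicity estimate
  have hkey : ∀ Q : ℝ, 0 < Q → Q < Qstar → 1 + (Qstar - Q) * c ≤ G Q := by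
    intro Q hQpos hQlt
    have hpt : ∀ q ∈ Tri A, (Qstar - Q) * g q ≤ ff Q q - ff Qstar q := by
      intro q hq
      have hK := hknn q hq
      have hL := hLnn q hq
      have e1 : Real.exp (-Q * L q) =
          Real.exp (-Qstar * L q) * Real.exp ((Qstar - Q) * L q) := by
        rw [← Real.exp_add]; ring_nf
      have e2 : (Qstar - Q) * L q + 1 ≤ Real.exp ((Qstar - Q) * L q) :=
        Real.add_one_le_exp _
      have e3 : Real.exp (-L q) ≤ Real.exp (-Qstar * L q) := by
        apply Real.exp_le_exp.2; nlinarith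
      have e4 : (0:ℝ) < Real.exp (-Qstar * L q) := Real.exp_pos _
      have e5 : (0:ℝ) < Real.exp (-L q) := Real.exp_pos _
      have hscalar : (Qstar - Q) * (L q * Real.exp (-L q)) ≤
          Real.exp (-Q * L q) - Real.exp (-Qstar * L q) := by
        rw [e1]
        nlinarith [mul_nonneg (mul_nonneg (by linarith : (0:ℝ) ≤ Qstar - Q) hL)
          (sub_nonneg.2 e3)]
      have := mul_le_mul_of_nonneg_left hscalar hK
      simp only [hffdef, hgdef]
      nlinarith
    have hmono : ∫ q in Tri A, (Qstar - Q) * g q ≤ ∫ q in Tri A, (ff Q q - ff Qstar q) :=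
      setIntegral_mono_on (hgInt.const_mul _) ((hffInt Q).sub (hffInt Qstar)) hTriM hpt
    rw [MeasureTheory.integral_const_mul, integral_sub (hffInt Q) (hffInt Qstar)] at hmono
    have : (Qstar - Q) * c ≤ G Q - G Qstar := hmono
    rw [hG1] at this
    linarith
  -- conclude
  by_cases hdiff : DifferentiableAt ℝ (TT γ N A p θ) Qstar
  · have hd := hdiff.hasDerivAt
    rw [hasDerivAt_iff_tendsto_slope] at hd
    have hd' : Tendsto (slope (TT γ N A p θ) Qstar) (𝓝[<] Qstar)
        (𝓝 (deriv (TT γ N A p θ) Qstar)) :=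
      hd.mono_left (nhdsWithin_mono _ (fun y hy => ne_of_lt hy))
    have hbound : ∀ᶠ Q in 𝓝[<] Qstar,
        slope (TT γ N A p θ) Qstar Q ≤ 1 - Qstar / 2 * c := by
      filter_upwards [Ioo_mem_nhdsLT_of_mem
        (⟨by linarith, le_refl _⟩ : Qstar ∈ Set.Ioc (Qstar/2) Qstar)] with Q hQ
      obtain ⟨hQlow, hQhi⟩ := hQ
      have hQpos : 0 < Q := by linarith
      have hGQ := hkey Q hQpos hQhi
      rw [slope_def_field, hTTeq Q, hTTeq Qstar, hG1, div_le_iff_of_neg (by linarith)]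
      have h1 : Q * (1 + (Qstar - Q) * c) ≤ Q * G Q :=
        mul_le_mul_of_nonneg_left hGQ hQpos.le
      nlinarith [mul_nonneg (mul_nonneg hc.le (by linarith : (0:ℝ) ≤ Qstar - Q))
        (by linarith : (0:ℝ) ≤ Q - Qstar/2)]
    have hle := le_of_tendsto hd' hbound
    have : 0 < Qstar / 2 * c := by positivity
    linarith
  · rw [deriv_zero_of_not_differentiableAt hdiff]; norm_num
end

section
/- Suppose 0 < R₀ < 1. Then the trivial fixed point Q = 0 of the iteration map T is locally attractive: there exists ε > 0 such that for every initial value Q⁰ with |Q⁰| ≤ ε, the iterates Q^{(j)} = T^j(Q⁰) converge to 0 as j → ∞. -/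
open MeasureTheory Real Set Filter

/-- for `0 < R₀ < 1`, the trivial fixed point `0` of `T` is locally
attractive: iterates starting close enough to `0` converge to `0`. -/
theorem trivial_fixed_point_attractive (γ A N : ℝ) (hγ : 0 < γ) (hA : 0 < A) (hN : 0 < N)
    (θ p : ℝ → ℝ)
    (hθc : ContinuousOn θ (Set.Icc 0 A)) (hθpos : ∀ x ∈ Set.Icc 0 A, 0 < θ x)
    (hpc : ContinuousOn p (Set.Icc 0 A)) (hppos : ∀ x ∈ Set.Icc 0 A, 0 < p x)
    (hnorm : (1/N) * ∫ x in (0:ℝ)..A, p x = 1)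
    (hR0pos : 0 < R0 γ N A p θ) (hR0lt : R0 γ N A p θ < 1) :
    ∃ ε > 0, ∀ Q0 : ℝ, |Q0| ≤ ε →
      Filter.Tendsto (fun j : ℕ => (TT γ N A p θ)^[j] Q0) Filter.atTop (nhds 0) := by
  set R := R0 γ N A p θ with hR
  set r : ℝ := (1 + R) / 2 with hrdef
  have hr0 : 0 < r := by rw [hrdef]; linarith
  have hRr : R < r := by rw [hrdef]; linarith
  have hr1 : r < 1 := by rw [hrdef]; linarith
  set M : ℝ := ∫ t in (0:ℝ)..A, θ t with hMdef
  have hM0 : 0 ≤ M :=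
    intervalIntegral.integral_nonneg hA.le (fun u hu => (hθpos u hu).le)
  have hrRpos : (1:ℝ) < r / R := by rw [lt_div_iff₀ hR0pos]; linarith
  have hlogpos : 0 < Real.log (r / R) := Real.log_pos hrRpos
  set ε : ℝ := Real.log (r / R) / (M + 1) with hεdef
  have hε0 : 0 < ε := div_pos hlogpos (by linarith)
  refine ⟨ε, hε0, ?_⟩
  -- geometry of the triangle
  have hclosed : IsClosed (Tri A) :=
    (isClosed_le continuous_const continuous_snd).inter
      ((isClosed_le continuous_snd continuous_fst).inter
        (isClosed_le continuous_fst continuous_const))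
  have hTriMeas : MeasurableSet (Tri A) := hclosed.measurableSet
  have hTriSub : Tri A ⊆ Set.Icc ((0:ℝ),(0:ℝ)) (A, A) := by
    rintro q ⟨h1, h2, h3⟩
    simp only [Set.mem_Icc, Prod.le_def]
    exact ⟨⟨h1.trans h2, h1⟩, ⟨h3, h2.trans h3⟩⟩
  have hTriComp : IsCompact (Tri A) :=
    isCompact_Icc.of_isClosed_subset hclosed hTriSub
  have hmemx : ∀ q ∈ Tri A, q.1 ∈ Set.Icc (0:ℝ) A := fun q hq => ⟨hq.1.trans hq.2.1, hq.2.2⟩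
  have hmems : ∀ q ∈ Tri A, q.2 ∈ Set.Icc (0:ℝ) A := fun q hq => ⟨hq.1, hq.2.1.trans hq.2.2⟩
  -- kernel continuity and integrability on the triangle
  have hc1 : ContinuousOn (fun q : ℝ × ℝ => p q.1) (Tri A) :=
    hpc.comp continuous_fst.continuousOn hmemx
  have hc2 : ContinuousOn (fun q : ℝ × ℝ => θ q.2) (Tri A) :=
    hθc.comp continuous_snd.continuousOn hmems
  have hkcont : ContinuousOn (fun q : ℝ × ℝ => kker γ N p θ q.1 q.2) (Tri A) := by
    show ContinuousOn (fun q : ℝ × ℝ =>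
      (p q.1 / N) * θ q.2 * Real.exp (-γ * (q.1 - q.2))) (Tri A)
    exact ((hc1.div_const N).mul hc2).mul
      ((Real.continuous_exp.comp (by continuity)).continuousOn)
  have hkint : IntegrableOn (fun q : ℝ × ℝ => kker γ N p θ q.1 q.2) (Tri A) :=
    hkcont.integrableOn_compact hTriComp
  have hθint : IntervalIntegrable θ volume 0 A :=
    hθc.intervalIntegrable_of_Icc hA.le
  have hknn : ∀ q ∈ Tri A, 0 ≤ kker γ N p θ q.1 q.2 := by
    intro q hq
    have := hppos q.1 (hmemx q hq)
    have := hθpos q.2 (hmems q hq)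
    unfold kker
    positivity
  -- key contraction estimate
  have key : ∀ Q : ℝ, |Q| ≤ ε → |TT γ N A p θ Q| ≤ r * |Q| := by
    intro Q hQ
    set f : ℝ × ℝ → ℝ := fun q => kker γ N p θ q.1 q.2 * Real.exp (-Q * Lam θ q.1 q.2)
      with hfdef
    have hfnn : ∀ q ∈ Tri A, 0 ≤ f q := fun q hq =>
      mul_nonneg (hknn q hq) (Real.exp_pos _).le
    have hbound : ∀ q ∈ Tri A, f q ≤ (r / R) * kker γ N p θ q.1 q.2 := by
      intro q hq
      obtain ⟨h1, h2, h3⟩ := hq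
      have hΛ0 : 0 ≤ Lam θ q.1 q.2 :=
        intervalIntegral.integral_nonneg h2
          (fun u hu => (hθpos u ⟨h1.trans hu.1, hu.2.trans h3⟩).le)
      have hΛM : Lam θ q.1 q.2 ≤ M := by
        refine intervalIntegral.integral_mono_interval h1 h2 h3 ?_ hθint
        exact ae_restrict_of_forall_mem measurableSet_Ioc
          (fun u hu => (hθpos u ⟨hu.1.le, hu.2⟩).le)
      have hexp : Real.exp (-Q * Lam θ q.1 q.2) ≤ r / R := by
        have h4 : -Q * Lam θ q.1 q.2 ≤ |Q| * Lam θ q.1 q.2 :=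
          mul_le_mul_of_nonneg_right (neg_le_abs Q) hΛ0
        have h5 : |Q| * Lam θ q.1 q.2 ≤ ε * M :=
          mul_le_mul hQ hΛM hΛ0 hε0.le
        have h6 : ε * (M + 1) = Real.log (r / R) := by
          rw [hεdef]; field_simp
        have h7 : -Q * Lam θ q.1 q.2 ≤ Real.log (r / R) := by nlinarith
        calc Real.exp (-Q * Lam θ q.1 q.2) ≤ Real.exp (Real.log (r / R)) :=
              Real.exp_le_exp.mpr h7
          _ = r / R := Real.exp_log (by positivity)
      calc f q = kker γ N p θ q.1 q.2 * Real.exp (-Q * Lam θ q.1 q.2) := rfl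
        _ ≤ kker γ N p θ q.1 q.2 * (r / R) :=
            mul_le_mul_of_nonneg_left hexp (hknn q ⟨h1, h2, h3⟩)
        _ = (r / R) * kker γ N p θ q.1 q.2 := mul_comm _ _
    have hInn : 0 ≤ ∫ q in Tri A, f q :=
      integral_nonneg_of_ae (ae_restrict_of_forall_mem hTriMeas hfnn)
    have hIle : (∫ q in Tri A, f q) ≤ ∫ q in Tri A, (r / R) * kker γ N p θ q.1 q.2 :=
      integral_mono_of_nonneg (ae_restrict_of_forall_mem hTriMeas hfnn)
        (hkint.const_mul _) (ae_restrict_of_forall_mem hTriMeas hbound)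
    have hIval : (∫ q in Tri A, (r / R) * kker γ N p θ q.1 q.2) = r := by
      rw [MeasureTheory.integral_const_mul]
      show r / R * R = r
      field_simp
    have hIr : (∫ q in Tri A, f q) ≤ r := hIval ▸ hIle
    have hTT : TT γ N A p θ Q = Q * ∫ q in Tri A, f q := by
      unfold TT FF; ring
    rw [hTT, abs_mul, abs_of_nonneg hInn, mul_comm]
    exact mul_le_mul_of_nonneg_right hIr (abs_nonneg Q)
  intro Q0 hQ0
  have hiter : ∀ j : ℕ, |(TT γ N A p θ)^[j] Q0| ≤ r ^ j * |Q0| := by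
    intro j
    induction j with
    | zero => simp
    | succ n ih =>
      rw [Function.iterate_succ_apply']
      have hrn1 : r ^ n ≤ 1 := pow_le_one₀ hr0.le hr1.le
      have h1 : |(TT γ N A p θ)^[n] Q0| ≤ ε := by
        have h2 : r ^ n * |Q0| ≤ 1 * |Q0| :=
          mul_le_mul_of_nonneg_right hrn1 (abs_nonneg Q0)
        rw [one_mul] at h2
        exact le_trans ih (le_trans h2 hQ0)
      calc |TT γ N A p θ ((TT γ N A p θ)^[n] Q0)|
          ≤ r * |(TT γ N A p θ)^[n] Q0| := key _ h1
        _ ≤ r * (r ^ n * |Q0|) := mul_le_mul_of_nonneg_left ih hr0.le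
        _ = r ^ (n + 1) * |Q0| := by ring
  have hg : Tendsto (fun j : ℕ => r ^ j * |Q0|) atTop (nhds 0) := by
    simpa using (tendsto_pow_atTop_nhds_zero_of_lt_one hr0.le hr1).mul_const |Q0|
  exact squeeze_zero_norm (fun j => by rw [Real.norm_eq_abs]; exact hiter j) hg
end

section
/- Define f(δ) = 2(1 - δ + δ²/2 - e^{-δ})/δ³ for δ > 0. Then f(δ) > 0 and δ·f(δ) < 1 for every δ > 0; consequently, for all real numbers 0 < k < δ one has k·f(δ) < 1, i.e., R₀ = k·f(δ) < 1 whenever δ = Aγ exceeds k = Aθ₀. -/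
open Real

/-- `f(δ) = 2(1 - δ + δ^2/2 - e^{-δ})/δ³`. -/
noncomputable def f (δ : ℝ) : ℝ := 2 * (1 - δ + δ^2 / 2 - Real.exp (-δ)) / δ^3

lemma exp_neg_lt_quad {δ : ℝ} (hδ : 0 < δ) : Real.exp (-δ) < 1 - δ + δ^2 / 2 := by
  have h1 : 1 + δ + δ^2/2 < Real.exp δ := by
    have h := Real.sum_le_exp_of_nonneg hδ.le 4
    have hsum : ∑ i ∈ Finset.range 4, δ ^ i / (Nat.factorial i : ℝ)
        = 1 + δ + δ^2/2 + δ^3/6 := by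
      norm_num [Finset.sum_range_succ, Nat.factorial]
    rw [hsum] at h
    nlinarith [pow_pos hδ 3]
  have hpos : (0:ℝ) < 1 + δ + δ^2/2 := by positivity
  have h2 : Real.exp (-δ) < 1 / (1 + δ + δ^2/2) := by
    rw [Real.exp_neg, inv_eq_one_div]
    exact one_div_lt_one_div_of_lt hpos h1
  have h3 : 1 / (1 + δ + δ^2/2) ≤ 1 - δ + δ^2/2 := by
    rw [div_le_iff₀ hpos]
    nlinarith [pow_pos hδ 4]
  linarith

/-- `f(δ) > 0` and `δ·f(δ) < 1` for every `δ > 0`; consequently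
`k·f(δ) < 1` whenever `0 < k < δ`. -/
theorem f_pos_and_subcritical :
    (∀ δ : ℝ, 0 < δ → 0 < f δ ∧ δ * f δ < 1) ∧
    (∀ k δ : ℝ, 0 < k → k < δ → k * f δ < 1) := by
  have key : ∀ δ : ℝ, 0 < δ → 0 < f δ ∧ δ * f δ < 1 := by
    intro δ hδ
    have hnum : 0 < 1 - δ + δ^2/2 - Real.exp (-δ) := by
      linarith [exp_neg_lt_quad hδ]
    have hlow : 1 - δ < Real.exp (-δ) := by
      have := Real.add_one_lt_exp (show -δ ≠ 0 by linarith)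
      linarith
    have hδ3 : (0:ℝ) < δ^3 := pow_pos hδ 3
    constructor
    · unfold f; positivity
    · unfold f
      rw [mul_div_assoc', div_lt_one hδ3]
      nlinarith
  refine ⟨key, fun k δ hk hkδ => ?_⟩
  have hδ : 0 < δ := hk.trans hkδ
  obtain ⟨hf, hδf⟩ := key δ hδ
  calc k * f δ < δ * f δ := by exact mul_lt_mul_of_pos_right hkδ hf
    _ < 1 := hδf
end

section
/- There exist constants C > 0 and ε₀ > 0 such that for every ε with 0 < ε < ε₀, the cubic equation y³ = y² - 2εy + 2ε² has a real root y(ε) satisfying |y(ε) - (1 - 2ε - 2ε²)| ≤ C ε³. -/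
open Real

/-- for small `ε > 0`, the cubic `y³ = y² - 2εy + 2ε²` has a real root
`y(ε)` with `y(ε) = 1 - 2ε - 2ε² + O(ε³)`. -/
theorem cubic_root_asymptotics :
    ∃ C > (0:ℝ), ∃ ε₀ > (0:ℝ), ∀ ε : ℝ, 0 < ε → ε < ε₀ →
      ∃ y : ℝ, y^3 = y^2 - 2 * ε * y + 2 * ε^2 ∧
        |y - (1 - 2 * ε - 2 * ε^2)| ≤ C * ε^3 := by
  refine ⟨20, by norm_num, 1/100, by norm_num, fun ε hε hε' => ?_⟩
  set f : ℝ → ℝ := fun y => y^3 - y^2 + 2*ε*y - 2*ε^2 with hf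
  set a : ℝ := 1 - 2*ε - 2*ε^2 - 20*ε^3 with ha
  set b : ℝ := 1 - 2*ε - 2*ε^2 + 20*ε^3 with hb
  have hab : a ≤ b := by nlinarith [pow_pos hε 3]
  have hcont : ContinuousOn f (Set.Icc a b) := by
    apply Continuous.continuousOn; continuity
  have hfa : f a ≤ 0 := by
    simp only [hf, ha]
    nlinarith [pow_pos hε 3, pow_pos hε 4, pow_pos hε 5, pow_pos hε 6, sq_nonneg ε,
      mul_pos hε hε, sq_nonneg (ε^2), sq_nonneg (ε^3)]
  have hfb : 0 ≤ f b := by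
    simp only [hf, hb]
    nlinarith [pow_pos hε 3, pow_pos hε 5, pow_pos hε 6, pow_pos hε 9,
      mul_nonneg (pow_pos hε 3).le (sub_pos.mpr hε').le,
      mul_nonneg (pow_pos hε 4).le (sub_pos.mpr hε').le,
      mul_nonneg (pow_pos hε 5).le (sub_pos.mpr hε').le,
      mul_nonneg (pow_pos hε 6).le (sub_pos.mpr hε').le,
      mul_nonneg (pow_pos hε 7).le (sub_pos.mpr hε').le,
      mul_nonneg (pow_pos hε 8).le (sub_pos.mpr hε').le]
  have := intermediate_value_Icc hab hcont
  have h0 : (0:ℝ) ∈ Set.Icc (f a) (f b) := ⟨hfa, hfb⟩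
  obtain ⟨y, hy, hfy⟩ := this h0
  refine ⟨y, by simp only [hf] at hfy; linarith, ?_⟩
  rw [abs_le]
  constructor <;> [linarith [hy.1]; linarith [hy.2]]
end
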